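/- Let B_0,…,B_N be complex d×d matrices and suppose the characteristic polynomial factors as F(μ) = μ^e g(μ), where e ∈ ℕ and g is a polynomial with g(0) ≠ 0. Let λ = (λ_1,…,λ_m) be a stable non-resonant vector of eigenvalues for B_0,…,B_N, none of whose entries is zero. Then there exists a constant C > 0 such that for every multi-index α ∈ ℕ^m with |α| ≥ 2, the matrix T(λ^α) is invertible and ‖T(λ^α)⁻¹‖ ≤ C |λ^α|^{−e}. -/

import Mathlib

open Finset

/-- `T(μ) = Σ_{i=0}^N μ^i B_i`. -/
noncomputable def linT {d : ℕ} (N : ℕ) (B : ℕ → Matrix (Fin d) (Fin d) ℂ) (μ : ℂ) :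
    Matrix (Fin d) (Fin d) ℂ :=
  ∑ i ∈ Finset.range (N + 1), μ ^ i • B i

/-- The characteristic polynomial `F(μ) = det T(μ)`. -/
noncomputable def charF {d : ℕ} (N : ℕ) (B : ℕ → Matrix (Fin d) (Fin d) ℂ) (μ : ℂ) : ℂ :=
  (linT N B μ).det

/-- `λ^α = λ₁^{α₁} ⋯ λ_m^{α_m}` for a multi-index `α ∈ ℕ^m`. -/
def mIdxPow {m : ℕ} (lam : Fin m → ℂ) (α : Fin m → ℕ) : ℂ :=
  ∏ j, lam j ^ α j

/-- `|α| = α₁ + ⋯ + α_m`. -/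
def mIdxSize {m : ℕ} (α : Fin m → ℕ) : ℕ :=
  ∑ j, α j

/-- `λ = (λ₁,…,λ_m)` is a stable non-resonant vector of eigenvalues for
`B_0,…,B_N` : each `|λ_j| < 1` with `F(λ_j) = 0`, and `F(λ^α) ≠ 0` for every
multi-index `α` with `|α| ≥ 2`. -/
def StableNonResonant {d m : ℕ} (N : ℕ) (B : ℕ → Matrix (Fin d) (Fin d) ℂ)
    (lam : Fin m → ℂ) : Prop :=
  (∀ j, ‖lam j‖ < 1 ∧ charF N B (lam j) = 0) ∧
  ∀ α : Fin m → ℕ, 2 ≤ mIdxSize α → charF N B (mIdxPow lam α) ≠ 0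

/-- Operator norm of a complex matrix, acting by `mulVec` on `ℂ^d` with the
sup norm. -/
noncomputable def matOpNorm {d : ℕ} (M : Matrix (Fin d) (Fin d) ℂ) : ℝ :=
  ‖LinearMap.toContinuousLinearMap (Matrix.mulVecLin M)‖

/-!
Cramer's rule gives `T(μ)⁻¹ = adj T(μ) / (μ^e g(μ))`. The adjugate is continuous in `μ`, hence
bounded on the closed unit disc, which contains every `λ^α`. Since `|λ_j| < 1`, the points `λ^α`
tend to `0` as `α` leaves finite sets, where `g` stays away from zero; the finitely many
remaining values `g(λ^α)` are nonzero by non-resonance. So `|g(λ^α)|` is bounded below.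
-/

open Filter Topology

section MatOpNorm

variable {d : ℕ}

lemma matOpNorm_nonneg (M : Matrix (Fin d) (Fin d) ℂ) : 0 ≤ matOpNorm M :=
  norm_nonneg _

lemma matOpNorm_smul (r : ℂ) (M : Matrix (Fin d) (Fin d) ℂ) :
    matOpNorm (r • M) = ‖r‖ * matOpNorm M := by
  unfold matOpNorm
  rw [show Matrix.mulVecLin (r • M) = r • Matrix.mulVecLin M from
    map_smul Matrix.toLin'.toLinearMap r M, map_smul]
  exact norm_smul r _

lemma matOpNorm_inv (M : Matrix (Fin d) (Fin d) ℂ) :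
    matOpNorm M⁻¹ = ‖M.det‖⁻¹ * matOpNorm M.adjugate := by
  rw [Matrix.inv_def, Ring.inverse_eq_inv, matOpNorm_smul, norm_inv]

lemma continuous_matOpNorm :
    Continuous fun M : Matrix (Fin d) (Fin d) ℂ => matOpNorm M :=
  (LinearMap.continuous_of_finiteDimensional <| LinearMap.toContinuousLinearMap.toLinearMap.comp
    (Matrix.toLin' : Matrix (Fin d) (Fin d) ℂ ≃ₗ[ℂ] _).toLinearMap).norm

end MatOpNorm

lemma continuous_linT {d : ℕ} (N : ℕ) (B : ℕ → Matrix (Fin d) (Fin d) ℂ) :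
    Continuous (linT N B) :=
  continuous_finsetSum _ fun i _ => (continuous_pow i).smul continuous_const

lemma exists_pos_forall_matOpNorm_adjugate_linT_le {d : ℕ} (N : ℕ)
    (B : ℕ → Matrix (Fin d) (Fin d) ℂ) {s : Set ℂ} (hs : IsCompact s) :
    ∃ K > 0, ∀ μ ∈ s, matOpNorm (linT N B μ).adjugate ≤ K := by
  obtain ⟨K, hK⟩ := hs.exists_bound_of_continuousOn
    (continuous_matOpNorm.comp (continuous_linT N B).matrix_adjugate).continuousOn
  exact ⟨max K 1, by positivity, fun μ hμ =>
    le_max_of_le_left ((le_abs_self _).trans (hK μ hμ))⟩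

section MultiIndex

variable {m : ℕ} {lam : Fin m → ℂ}

lemma norm_mIdxPow (α : Fin m → ℕ) : ‖mIdxPow lam α‖ = ∏ j, ‖lam j‖ ^ α j := by
  simp only [mIdxPow, Complex.norm_prod, norm_pow]

lemma norm_mIdxPow_le_one (hlam : ∀ j, ‖lam j‖ ≤ 1) (α : Fin m → ℕ) :
    ‖mIdxPow lam α‖ ≤ 1 := by
  rw [norm_mIdxPow]
  exact Finset.prod_le_one (fun _ _ => by positivity) fun j _ =>
    pow_le_one₀ (norm_nonneg _) (hlam j)

lemma norm_mIdxPow_le (hlam : ∀ j, ‖lam j‖ ≤ 1) (α : Fin m → ℕ) (j : Fin m) :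
    ‖mIdxPow lam α‖ ≤ ‖lam j‖ ^ α j := by
  rw [norm_mIdxPow, ← Finset.mul_prod_erase _ _ (Finset.mem_univ j)]
  exact mul_le_of_le_one_right (by positivity)
    (Finset.prod_le_one (fun _ _ => by positivity) fun i _ =>
      pow_le_one₀ (norm_nonneg _) (hlam i))

/-- A multi-index leaves every finite set exactly when one of its coordinates tends to
infinity (`Filter.coprodᵢ_cofinite`), and `|λ^α| ≤ |λ_j|^{α_j}`. -/
lemma tendsto_mIdxPow_cofinite_nhds_zero (hlam : ∀ j, ‖lam j‖ < 1) :
    Tendsto (mIdxPow lam) cofinite (𝓝 0) := by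
  rw [← coprodᵢ_cofinite, Filter.coprodᵢ, tendsto_iSup]
  intro j
  have hpow : Tendsto (fun α : Fin m → ℕ => ‖lam j‖ ^ α j)
      (comap (Function.eval j) cofinite) (𝓝 0) :=
    (tendsto_pow_atTop_nhds_zero_of_lt_one (norm_nonneg _) (hlam j)).comp
      (Nat.cofinite_eq_atTop ▸ tendsto_comap)
  exact squeeze_zero_norm (fun α => norm_mIdxPow_le (fun i => (hlam i).le) α j) hpow

end MultiIndex

lemma exists_pos_forall_le_norm_of_tendsto_cofinite {ι X E : Type*} [TopologicalSpace X]
    [NormedAddCommGroup E] {u : ι → X} {x : X} {g : X → E}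
    (hu : Tendsto u cofinite (𝓝 x)) (hg : ContinuousAt g x) (hgx : g x ≠ 0)
    (hgu : ∀ i, g (u i) ≠ 0) :
    ∃ c > 0, ∀ i, c ≤ ‖g (u i)‖ := by
  have hinv : Tendsto (fun i => ‖g (u i)‖⁻¹) cofinite (𝓝 ‖g x‖⁻¹) :=
    (hg.tendsto.comp hu).norm.inv₀ (norm_ne_zero_iff.2 hgx)
  obtain ⟨M, hM⟩ := hinv.bddAbove_range_of_cofinite
  refine ⟨(max M 1)⁻¹, by positivity, fun i => ?_⟩
  exact inv_le_of_inv_le₀ (norm_pos_iff.2 (hgu i))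
    (le_max_of_le_left (hM (Set.mem_range_self i)))

theorem singular_bound_on_inverses_general {d m N : ℕ}
    (B : ℕ → Matrix (Fin d) (Fin d) ℂ)
    (e : ℕ) (g : Polynomial ℂ) (hg0 : g.eval 0 ≠ 0)
    (hfac : ∀ μ : ℂ, charF N B μ = μ ^ e * g.eval μ)
    (lam : Fin m → ℂ) (hlam : StableNonResonant N B lam) :
    ∃ C : ℝ, 0 < C ∧ ∀ α : Fin m → ℕ, 2 ≤ mIdxSize α →
      IsUnit (linT N B (mIdxPow lam α)) ∧
      matOpNorm (linT N B (mIdxPow lam α))⁻¹ ≤ C * (‖mIdxPow lam α‖ ^ e)⁻¹ := by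
  have hstable : ∀ j, ‖lam j‖ < 1 := fun j => (hlam.1 j).1
  obtain ⟨K, hK0, hK⟩ :=
    exists_pos_forall_matOpNorm_adjugate_linT_le N B (isCompact_closedBall (0 : ℂ) 1)
  have hg_ne : ∀ α, 2 ≤ mIdxSize α → g.eval (mIdxPow lam α) ≠ 0 := fun α hα h =>
    hlam.2 α hα (by rw [hfac, h, mul_zero])
  obtain ⟨c, hc0, hc⟩ := exists_pos_forall_le_norm_of_tendsto_cofinite
    (u := fun α : {α : Fin m → ℕ // 2 ≤ mIdxSize α} => mIdxPow lam α)
    ((tendsto_mIdxPow_cofinite_nhds_zero hstable).comp Subtype.val_injective.tendsto_cofinite)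
    g.continuous.continuousAt hg0 fun α => hg_ne α α.2
  refine ⟨K / c, div_pos hK0 hc0, fun α hα => ⟨?_, ?_⟩⟩
  · exact (Matrix.isUnit_iff_isUnit_det _).2 (isUnit_iff_ne_zero.2 (hlam.2 α hα))
  · have hadj := hK _ <|
      mem_closedBall_zero_iff.2 (norm_mIdxPow_le_one (fun j => (hstable j).le) α)
    have hgα : c ≤ ‖g.eval (mIdxPow lam α)‖ := hc ⟨α, hα⟩
    rw [matOpNorm_inv, ← charF, hfac, norm_mul, norm_pow, mul_inv, mul_assoc, mul_comm]
    gcongr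
    calc ‖g.eval (mIdxPow lam α)‖⁻¹ * matOpNorm (linT N B (mIdxPow lam α)).adjugate
        ≤ c⁻¹ * K :=
          mul_le_mul (inv_anti₀ hc0 hgα) hadj (matOpNorm_nonneg _) (inv_nonneg.2 hc0.le)
      _ = K / c := inv_mul_eq_div c K

/-- Singular case: if the characteristic polynomial factors
as `F(μ) = μ^e g(μ)` with `g(0) ≠ 0`, and `λ` is a stable non-resonant vector
of eigenvalues with nonzero entries, then there is `C > 0` such that for every
multi-index `α` with `|α| ≥ 2`, `T(λ^α)` is invertible and
`‖T(λ^α)⁻¹‖ ≤ C |λ^α|^{-e}`. -/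
theorem singular_bound_on_inverses {d m N : ℕ}
    (B : ℕ → Matrix (Fin d) (Fin d) ℂ)
    (e : ℕ) (g : Polynomial ℂ) (hg0 : g.eval 0 ≠ 0)
    (hfac : ∀ μ : ℂ, charF N B μ = μ ^ e * g.eval μ)
    (lam : Fin m → ℂ) (hlam : StableNonResonant N B lam)
    (hne : ∀ j, lam j ≠ 0) :
    ∃ C : ℝ, 0 < C ∧ ∀ α : Fin m → ℕ, 2 ≤ mIdxSize α →
      IsUnit (linT N B (mIdxPow lam α)) ∧
      matOpNorm (linT N B (mIdxPow lam α))⁻¹ ≤ C * (‖mIdxPow lam α‖ ^ e)⁻¹ :=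
  singular_bound_on_inverses_general B e g hg0 hfac lam hlam
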